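/- arXiv:2406.12013 — 5 statements merged into one kernel-verified Lean document; each statement's English description precedes it below -/
import Mathlib

section
/- Let λ ∈ [-1, 0) and m ≥ 1 an integer. Suppose h is a univariate polynomial such that 0 < h(t) ≤ 1 for all t ∈ [0,1], h(t) > 0 for all t ∈ [-1,1], and h(t) ≥ -m/λ - 1/2 for all t ∈ [-1, λ]. Then for any real symmetric m×m matrix G with all eigenvalues in [-1,1] and smallest eigenvalue in [-1, λ], it holds that tr(h(G)·G) ≤ (-m/λ - 1/2)·λ + m - 1 < 0. -/
/-- Conjugation by a unitary matrix as an `ℝ`-algebra homomorphism. -/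
def unitaryConjAlgHom {n : Type*} [Fintype n] [DecidableEq n]
    (U : Matrix.unitaryGroup n ℝ) : Matrix n n ℝ →ₐ[ℝ] Matrix n n ℝ where
  toFun x := (U : Matrix n n ℝ) * x * star (U : Matrix n n ℝ)
  map_one' := by
    simpa using Matrix.mem_unitaryGroup_iff.mp U.2
  map_mul' x y := by
    have hU : star (U : Matrix n n ℝ) * (U : Matrix n n ℝ) = 1 :=
      Matrix.mem_unitaryGroup_iff'.mp U.2
    calc (U : Matrix n n ℝ) * (x * y) * star (U : Matrix n n ℝ)
        = (U : Matrix n n ℝ) * x * (star (U : Matrix n n ℝ) * (U : Matrix n n ℝ)) * y *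
            star (U : Matrix n n ℝ) := by rw [hU]; noncomm_ring
      _ = _ := by noncomm_ring
  map_zero' := by simp
  map_add' x y := by noncomm_ring
  commutes' r := by
    have hU : (U : Matrix n n ℝ) * star (U : Matrix n n ℝ) = 1 :=
      Matrix.mem_unitaryGroup_iff.mp U.2
    simp only [Algebra.algebraMap_eq_smul_one, Matrix.mul_smul, Matrix.smul_mul, mul_one]
    rw [hU]

theorem aeval_diagonal {n : Type*} [Fintype n] [DecidableEq n]
    (d : n → ℝ) (p : Polynomial ℝ) :
    Polynomial.aeval (Matrix.diagonal d) p = Matrix.diagonal (fun i => p.eval (d i)) := by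
  have h1 : Matrix.diagonal d = Matrix.diagonalAlgHom ℝ d := rfl
  rw [h1, Polynomial.aeval_algHom_apply]
  have h2 : Polynomial.aeval d p = fun i => p.eval (d i) := by
    funext i
    have := (Polynomial.aeval_algHom_apply (Pi.evalAlgHom ℝ (fun _ : n => ℝ) i) d p).symm
    simpa using this
  rw [h2]
  rfl

/-- If `λ ∈ [-1,0)`, `m ≥ 1`, `h` satisfies `0 < h ≤ 1` on `[0,1]`, `h > 0` on `[-1,1]`,
`h ≥ -m/λ - 1/2` on `[-1,λ]`, and `G` is real symmetric with all eigenvalues in `[-1,1]`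
and smallest eigenvalue in `[-1,λ]`, then `tr(h(G)·G) ≤ (-m/λ - 1/2)·λ + m - 1 < 0`. -/
theorem trace_polyEval_mul_neg
    (lam : ℝ) (hlam : lam ∈ Set.Ico (-1 : ℝ) 0)
    (m : ℕ) (hm : 1 ≤ m)
    (h : Polynomial ℝ)
    (h1 : ∀ t ∈ Set.Icc (0 : ℝ) 1, 0 < h.eval t ∧ h.eval t ≤ 1)
    (h2 : ∀ t ∈ Set.Icc (-1 : ℝ) 1, 0 < h.eval t)
    (h3 : ∀ t ∈ Set.Icc (-1 : ℝ) lam, -(m : ℝ) / lam - 1 / 2 ≤ h.eval t)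
    (G : Matrix (Fin m) (Fin m) ℝ) (hG : G.IsHermitian)
    (heig : ∀ j, hG.eigenvalues j ∈ Set.Icc (-1 : ℝ) 1)
    (hmin : (⨅ j, hG.eigenvalues j) ∈ Set.Icc (-1 : ℝ) lam) :
    Matrix.trace (Polynomial.aeval G h * G) ≤ (-(m : ℝ) / lam - 1 / 2) * lam + m - 1 ∧
      (-(m : ℝ) / lam - 1 / 2) * lam + m - 1 < 0 := by
  haveI : NeZero m := ⟨by omega⟩
  set ev := hG.eigenvalues with hev
  set c : ℝ := -(m : ℝ) / lam - 1 / 2 with hc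
  have hlamneg : lam < 0 := hlam.2
  -- trace formula
  have key : Matrix.trace (Polynomial.aeval G h * G) = ∑ j, h.eval (ev j) * ev j := by
    set U := hG.eigenvectorUnitary with hU
    have hspec : G = unitaryConjAlgHom U (Matrix.diagonal ev) := by
      have := hG.spectral_theorem
      simpa [unitaryConjAlgHom, Function.comp] using this
    have haev : Polynomial.aeval G h
        = unitaryConjAlgHom U (Matrix.diagonal (fun i => h.eval (ev i))) := by
      rw [hspec, Polynomial.aeval_algHom_apply, aeval_diagonal]
    rw [haev, hspec, ← map_mul]
    have htr : ∀ X : Matrix (Fin m) (Fin m) ℝ,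
        Matrix.trace (unitaryConjAlgHom U X) = Matrix.trace X := by
      intro X
      have hU2 : star (U : Matrix (Fin m) (Fin m) ℝ) * (U : Matrix (Fin m) (Fin m) ℝ) = 1 :=
        Matrix.mem_unitaryGroup_iff'.mp U.2
      show Matrix.trace ((U : Matrix (Fin m) (Fin m) ℝ) * X * star (U : Matrix (Fin m) (Fin m) ℝ))
        = Matrix.trace X
      rw [Matrix.trace_mul_cycle, hU2, one_mul]
    rw [htr, Matrix.diagonal_mul_diagonal, Matrix.trace_diagonal]
  -- a minimizing index
  obtain ⟨j0, hj0⟩ := Finite.exists_min ev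
  have hinf : (⨅ j, ev j) = ev j0 :=
    le_antisymm (ciInf_le (Finite.bddBelow_range _) j0) (le_ciInf hj0)
  rw [hinf] at hmin
  -- c is positive
  have hcpos : 0 < c := by
    have h1m : (1 : ℝ) ≤ m := by exact_mod_cast hm
    have hd : -(m : ℝ) / lam = (m : ℝ) / (-lam) := by ring
    have : (1 : ℝ) ≤ (m : ℝ) / (-lam) := by
      rw [one_le_div (by linarith)]
      linarith [hlam.1]
    rw [hc, hd]; linarith
  -- bound each term
  have hbound : ∀ j, h.eval (ev j) * ev j ≤ if j = j0 then c * lam else 1 := by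
    intro j
    by_cases hj : j = j0
    · subst hj
      simp only [if_pos rfl]
      have hle : ev j ≤ lam := hmin.2
      have hevneg : ev j < 0 := lt_of_le_of_lt hle hlamneg
      have hch : c ≤ h.eval (ev j) := h3 _ ⟨hmin.1, hmin.2⟩
      calc h.eval (ev j) * ev j ≤ c * ev j :=
            mul_le_mul_of_nonpos_right hch hevneg.le
        _ ≤ c * lam := mul_le_mul_of_nonneg_left hle hcpos.le
    · simp only [if_neg hj]
      rcases le_or_gt 0 (ev j) with hpos | hneg
      · have hmem : ev j ∈ Set.Icc (0 : ℝ) 1 := ⟨hpos, (heig j).2⟩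
        have := h1 _ hmem
        nlinarith [(heig j).2]
      · have := h2 _ (heig j)
        nlinarith
  have hsum : ∑ j, h.eval (ev j) * ev j ≤ c * lam + m - 1 := by
    calc ∑ j, h.eval (ev j) * ev j ≤ ∑ j, (if j = j0 then c * lam else 1) :=
          Finset.sum_le_sum fun j _ => hbound j
      _ = c * lam + m - 1 := by
          have e1 : ∀ j : Fin m, (if j = j0 then c * lam else 1)
              = (if j = j0 then c * lam - 1 else 0) + 1 := by
            intro j; split <;> ring
          rw [Finset.sum_congr rfl fun j _ => e1 j, Finset.sum_add_distrib,
            Finset.sum_ite_eq' Finset.univ j0, Finset.sum_const]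
          simp [Finset.card_univ]
          ring
  -- the negative upper bound
  have hneg : c * lam + (m : ℝ) - 1 < 0 := by
    have e : c * lam = -(m : ℝ) - lam / 2 := by
      rw [hc, sub_mul, div_mul_cancel₀ _ (ne_of_lt hlamneg)]
      ring
    rw [e]
    linarith [hlam.1]
  exact ⟨by rw [key]; linarith [hsum], by linarith [hneg]⟩
end

section
/- Let Tₖ(u) = Σ_{i=1}^k aᵢuⁱ be the degree-k Taylor polynomial at u=0 of φ(u) = (1/2)(1-4u)^{-1/2} - 1/2, and define cₖ(t) = t + (2t-1)·Tₖ(t(1-t)). Then cₖ(0) = 0, cₖ(1) = 1, cₖ^{(i)}(0) = cₖ^{(i)}(1) = 0 for all i ∈ {1,…,k}, 0 ≤ cₖ(t) ≤ 1 for all t ∈ [0,1], and cₖ(t) + cₖ(1−t) = 1 for all t ∈ [0,1]. -/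
/-!
With `u = t(1-t)` we have `u' = 1 - 2t` and `(1 - 2t)² = 1 - 4u`, so `c' = 1 + 2T(u) - (1 - 4u)T'(u)`.
Since `φ` solves `(1 - 4u)φ' = 2φ + 1`, its coefficients satisfy `a₁ = 1` and
`(i + 1)aᵢ₊₁ = (4i + 2)aᵢ`, and for the truncation `T = Tₖ` everything but the top term cancels:
`cₖ' = (k + 1)aₖ₊₁(t(1-t))ᵏ`. This is nonnegative on `[0,1]` and vanishes to order `k` at `0`
and `1`; the symmetry `cₖ(1-t) = 1 - cₖ(t)` holds because `u` is symmetric and `2t - 1` odd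
under `t ↦ 1 - t`.
-/

open Polynomial Finset

section CommRing

variable {R : Type*} [CommRing R] (a : ℕ → R) (k : ℕ)

noncomputable def concatPoly : R[X] :=
  X + (2 * X - 1) * ∑ i ∈ Icc 1 k, C (a i) * (X * (1 - X)) ^ i

theorem eval_concatPoly (t : R) :
    (concatPoly a k).eval t = t + (2 * t - 1) * ∑ i ∈ Icc 1 k, a i * (t * (1 - t)) ^ i := by
  simp [concatPoly, eval_finsetSum]

theorem eval_one_sub_concatPoly (t : R) :
    (concatPoly a k).eval (1 - t) = 1 - (concatPoly a k).eval t := by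
  simp only [eval_concatPoly, sub_sub_cancel, mul_comm (1 - t) t]
  ring

theorem eval_zero_concatPoly : (concatPoly a k).eval 0 = 0 := by
  rw [eval_concatPoly, Finset.sum_eq_zero fun i hi => by
    rw [zero_mul, zero_pow (by simp at hi; omega), mul_zero]]
  ring

theorem eval_one_concatPoly : (concatPoly a k).eval 1 = 1 := by
  simpa [eval_zero_concatPoly] using eval_one_sub_concatPoly a k 0

variable {a}

theorem derivative_concatPoly (h1 : a 1 = 1)
    (hrec : ∀ i : ℕ, 1 ≤ i → ((i : R) + 1) * a (i + 1) = (4 * i + 2) * a i) :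
    derivative (concatPoly a k) = C (((k : R) + 1) * a (k + 1)) * (X * (1 - X)) ^ k := by
  induction k with
  | zero => simp [concatPoly, h1]
  | succ k ih =>
    have hsplit : concatPoly a (k + 1)
        = concatPoly a k + (2 * X - 1) * (C (a (k + 1)) * (X * (1 - X)) ^ (k + 1)) := by
      rw [concatPoly, concatPoly, sum_Icc_succ_top (by omega)]
      ring
    have hrec' := congrArg C (hrec (k + 1) (by omega))
    rw [hsplit, derivative_add, ih, derivative_mul]
    simp only [map_mul, map_add, map_natCast, map_ofNat, map_one, derivative_mul, derivative_pow,
      derivative_sub, derivative_X, derivative_C, derivative_one, derivative_ofNat] at hrec' ⊢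
    push_cast at hrec' ⊢
    linear_combination -(X * (1 - X)) ^ (k + 1) * hrec'

theorem isRoot_iterate_derivative_concatPoly (h1 : a 1 = 1)
    (hrec : ∀ i : ℕ, 1 ≤ i → ((i : R) + 1) * a (i + 1) = (4 * i + 2) * a i)
    {r : R} (hr : r * (1 - r) = 0) {j : ℕ} (hj : 1 ≤ j) (hjk : j ≤ k) :
    (derivative^[j] (concatPoly a k)).IsRoot r := by
  obtain ⟨j, rfl⟩ := Nat.exists_eq_add_of_le' hj
  have hdvd : (X - C r) ^ k ∣ derivative (concatPoly a k) := by
    rw [derivative_concatPoly k h1 hrec]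
    exact (pow_dvd_pow_of_dvd (dvd_iff_isRoot.mpr (by simp [hr])) k).mul_left _
  rw [Function.iterate_succ_apply]
  exact dvd_iff_isRoot.mp <| (dvd_pow_self _ (by omega)).trans
    (pow_sub_dvd_iterate_derivative_of_pow_dvd j hdvd)

end CommRing

theorem Polynomial.iteratedDeriv_eval {𝕜 : Type*} [NontriviallyNormedField 𝕜] (p : 𝕜[X]) (n : ℕ) :
    iteratedDeriv n (fun x => p.eval x) = fun x => (derivative^[n] p).eval x := by
  induction n with
  | zero => simp
  | succ n ih =>
    ext x
    rw [iteratedDeriv_succ, ih, Function.iterate_succ_apply', Polynomial.deriv]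

theorem eval_concatPoly_mem_Icc {a : ℕ → ℝ} (k : ℕ) (h1 : a 1 = 1)
    (hrec : ∀ i : ℕ, 1 ≤ i → ((i : ℝ) + 1) * a (i + 1) = (4 * i + 2) * a i)
    (hpos : 0 ≤ a (k + 1)) {t : ℝ} (ht : t ∈ Set.Icc 0 1) :
    (concatPoly a k).eval t ∈ Set.Icc 0 1 := by
  have hmono : MonotoneOn (fun t => (concatPoly a k).eval t) (Set.Icc 0 1) := by
    refine monotoneOn_of_deriv_nonneg (convex_Icc 0 1) (concatPoly a k).continuousOn
      (concatPoly a k).differentiableOn fun t ht => ?_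
    rw [interior_Icc] at ht
    have hu : 0 ≤ t * (1 - t) := mul_nonneg ht.1.le (by linarith [ht.2])
    rw [Polynomial.deriv, derivative_concatPoly k h1 hrec]
    simp only [eval_mul, eval_C, eval_pow, eval_sub, eval_one, eval_X]
    positivity
  have h0 := hmono (Set.left_mem_Icc.mpr zero_le_one) ht ht.1
  have h1 := hmono ht (Set.right_mem_Icc.mpr zero_le_one) ht.2
  simp only [eval_zero_concatPoly, eval_one_concatPoly] at h0 h1
  exact ⟨h0, h1⟩

noncomputable def phiCoeff (i : ℕ) : ℝ :=
  (1 / 2) * ((4 : ℝ) ^ i / (Nat.factorial i : ℝ)) * ∏ j ∈ range i, ((j : ℝ) + 1 / 2)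

theorem phiCoeff_one : phiCoeff 1 = 1 := by
  norm_num [phiCoeff]

theorem succ_mul_phiCoeff_succ (i : ℕ) :
    ((i : ℝ) + 1) * phiCoeff (i + 1) = (4 * i + 2) * phiCoeff i := by
  rw [phiCoeff, phiCoeff, prod_range_succ, pow_succ, Nat.factorial_succ]
  push_cast
  field_simp
  ring

theorem phiCoeff_pos (i : ℕ) : 0 < phiCoeff i := by
  unfold phiCoeff
  have := prod_pos fun (j : ℕ) (_ : j ∈ range i) => (by positivity : (0 : ℝ) < j + 1 / 2)
  positivity

/-- Properties of `cₖ(t) = t + (2t-1)·Tₖ(t(1-t))`, where `Tₖ(u) = ∑_{i=1}^k aᵢuⁱ`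
is the degree-`k` Taylor polynomial of `φ(u) = (1/2)(1-4u)^(-1/2) - 1/2` at `0`:
`cₖ(0) = 0`, `cₖ(1) = 1`, `cₖ^{(i)}(0) = cₖ^{(i)}(1) = 0` for `1 ≤ i ≤ k`,
`0 ≤ cₖ ≤ 1` on `[0,1]`, and `cₖ(t) + cₖ(1-t) = 1` on `[0,1]`. -/
theorem concatenation_polynomial_taylor
    (k : ℕ) (a : ℕ → ℝ)
    (ha : ∀ i, 1 ≤ i →
      a i = (1 / 2) * ((4 : ℝ) ^ i / (Nat.factorial i : ℝ)) * ∏ j ∈ Finset.range i, ((j : ℝ) + 1 / 2))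
    (c : ℝ → ℝ)
    (hc : ∀ t, c t = t + (2 * t - 1) * ∑ i ∈ Finset.Icc 1 k, a i * (t * (1 - t)) ^ i) :
    c 0 = 0 ∧ c 1 = 1 ∧
      (∀ i : ℕ, 1 ≤ i → i ≤ k → iteratedDeriv i c 0 = 0 ∧ iteratedDeriv i c 1 = 0) ∧
      (∀ t ∈ Set.Icc (0 : ℝ) 1, 0 ≤ c t ∧ c t ≤ 1) ∧
      ∀ t ∈ Set.Icc (0 : ℝ) 1, c t + c (1 - t) = 1 := by
  obtain rfl : c = fun t => (concatPoly a k).eval t := funext fun t => by rw [hc, eval_concatPoly]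
  have h1 : a 1 = 1 := (ha 1 le_rfl).trans phiCoeff_one
  have hrec (i : ℕ) (hi : 1 ≤ i) : ((i : ℝ) + 1) * a (i + 1) = (4 * i + 2) * a i := by
    rw [ha i hi, ha (i + 1) (by omega)]
    exact succ_mul_phiCoeff_succ i
  have hpos : 0 ≤ a (k + 1) := (ha (k + 1) (by omega)).trans_ge (phiCoeff_pos _).le
  refine ⟨eval_zero_concatPoly a k, eval_one_concatPoly a k, fun i hi hik => ?_,
    fun t ht => eval_concatPoly_mem_Icc k h1 hrec hpos ht,
    fun t _ => by simp only [eval_one_sub_concatPoly]; ring⟩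
  rw [iteratedDeriv_eval]
  exact ⟨isRoot_iterate_derivative_concatPoly k h1 hrec (by ring) hi hik,
    isRoot_iterate_derivative_concatPoly k h1 hrec (by ring) hi hik⟩
end

section
/- With Tₖ and cₖ as in the construction (Tₖ the degree-k Taylor polynomial of φ(u) = (1/2)(1-4u)^{-1/2} - 1/2 at 0, cₖ(t) = t + (2t-1)Tₖ(t(1-t))), one has cₖ(t) = (1−2t)·Σ_{i=k+1}^∞ aᵢ·tⁱ(1−t)ⁱ for all t ∈ [0, 1/2), where aᵢ are the Taylor coefficients of φ at 0. -/
/-!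
The coefficients are those of the binomial series: `aᵢ = ½ · 4ⁱ · multichoose (½) i` for `i ≥ 1`,
so `∑ aᵢ uⁱ = φ(u) = ½ (1 - 4u)^(-½) - ½` for `|4u| < 1`. At `u = t(1 - t)` one has
`1 - 4u = (1 - 2t)²`, hence `φ(u) = t / (1 - 2t)`, and
`cₖ(t) = t - (1 - 2t) Tₖ(u) = (1 - 2t) (φ(u) - Tₖ(u))`, the last factor being the tail of the series.
-/

open Finset

theorem ascPochhammer_eval_eq_prod_range {R : Type*} [CommSemiring R] (n : ℕ) (r : R) :
    (ascPochhammer R n).eval r = ∏ j ∈ range n, (r + j) := by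
  induction n with
  | zero => simp
  | succ n ih => simp [ascPochhammer_succ_right, ih, prod_range_succ]

theorem Ring.multichoose_eq_prod_range_div_factorial {K : Type*} [Field K] [CharZero K]
    (r : K) (n : ℕ) : Ring.multichoose r n = (∏ j ∈ range n, (r + j)) / n.factorial := by
  rw [eq_div_iff (Nat.cast_ne_zero.2 n.factorial_ne_zero), mul_comm, ← nsmul_eq_mul,
    Ring.factorial_nsmul_multichoose_eq_ascPochhammer,
    Polynomial.ascPochhammer_smeval_eq_eval, ascPochhammer_eval_eq_prod_range]

theorem Real.hasSum_multichoose_mul_pow (a : ℝ) {x : ℝ} (hx : |x| < 1) :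
    HasSum (fun n => Ring.multichoose a n * x ^ n) ((1 - x) ^ (-a)) := by
  have h := (Real.one_div_one_sub_rpow_hasFPowerSeriesOnBall_zero a).hasSum
    (y := x) (by simpa [enorm_eq_nnnorm, ← NNReal.coe_lt_coe] using hx)
  simp only [zero_add, FormalMultilinearSeries.ofScalars_apply_eq] at h
  rw [Real.rpow_neg (by linarith [le_abs_self x]), ← one_div]
  simpa only [← Ring.multichoose_eq, smul_eq_mul] using h

theorem hasSum_coeff_mul_pow {a : ℕ → ℝ} (ha0 : a 0 = 0)
    (ha : ∀ i, 1 ≤ i →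
      a i = (1 / 2) * ((4 : ℝ) ^ i / (Nat.factorial i : ℝ)) * ∏ j ∈ Finset.range i, ((j : ℝ) + 1 / 2))
    {u : ℝ} (hu : |4 * u| < 1) :
    HasSum (fun i => a i * u ^ i) (1 / 2 * (1 - 4 * u) ^ (-(1 / 2) : ℝ) - 1 / 2) := by
  refine (((Real.hasSum_multichoose_mul_pow (1 / 2) hu).mul_left (1 / 2)).sub
    (hasSum_ite_eq 0 (1 / 2 : ℝ))).congr_fun fun i => ?_
  rcases Nat.eq_zero_or_pos i with rfl | hi
  · simp [ha0]
  · rw [ha i hi, Ring.multichoose_eq_prod_range_div_factorial, if_neg hi.ne', mul_pow]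
    simp only [add_comm (1 / 2 : ℝ)]
    ring

theorem rpow_neg_half_one_sub_four_mul_mul_one_sub {t : ℝ} (ht : t < 1 / 2) :
    (1 - 4 * (t * (1 - t))) ^ (-(1 / 2) : ℝ) = (1 - 2 * t)⁻¹ := by
  rw [show 1 - 4 * (t * (1 - t)) = (1 - 2 * t) ^ 2 by ring, Real.rpow_neg (by positivity),
    ← Real.sqrt_eq_rpow, Real.sqrt_sq (by linarith)]

/-- For `t ∈ [0, 1/2)`, `cₖ(t) = (1-2t)·∑_{i=k+1}^∞ aᵢ tⁱ(1-t)ⁱ`, where the `aᵢ` are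
the Taylor coefficients of `φ(u) = (1/2)(1-4u)^(-1/2) - 1/2` at `0` and
`cₖ(t) = t + (2t-1)·Tₖ(t(1-t))` with `Tₖ(u) = ∑_{i=1}^k aᵢuⁱ`. -/
theorem concatenation_polynomial_tail_sum
    (k : ℕ) (a : ℕ → ℝ) (ha0 : a 0 = 0)
    (ha : ∀ i, 1 ≤ i →
      a i = (1 / 2) * ((4 : ℝ) ^ i / (Nat.factorial i : ℝ)) * ∏ j ∈ Finset.range i, ((j : ℝ) + 1 / 2))
    (c : ℝ → ℝ)
    (hc : ∀ t, c t = t + (2 * t - 1) * ∑ i ∈ Finset.Icc 1 k, a i * (t * (1 - t)) ^ i) :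
    ∀ t ∈ Set.Ico (0 : ℝ) (1 / 2), ∃ s : ℝ,
      HasSum (fun i : ℕ => a (i + k + 1) * (t * (1 - t)) ^ (i + k + 1)) s ∧
        c t = (1 - 2 * t) * s := by
  rintro t ⟨ht0, ht1⟩
  have hu : |4 * (t * (1 - t))| < 1 := by
    rw [abs_of_nonneg (by nlinarith)]; nlinarith
  have hsum := hasSum_coeff_mul_pow ha0 ha hu
  rw [rpow_neg_half_one_sub_four_mul_mul_one_sub ht1] at hsum
  refine ⟨_, by simpa only [add_assoc] using (hasSum_nat_add_iff' (k + 1)).2 hsum, ?_⟩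
  rw [hc, range_eq_Ico, sum_eq_sum_Ico_succ_bot k.succ_pos, zero_add,
    Nat.succ_eq_add_one, Ico_add_one_right_eq_Icc, ha0, zero_mul, zero_add]
  have hne : 1 - 2 * t ≠ 0 := by linarith
  linear_combination (-1 / 2 : ℝ) * mul_inv_cancel₀ hne
end

section
/- For every positive integer v and every δ ∈ (0,1], there exists a nonnegative integer k < v such that 4^k·k! / (δ^k·(v−k)^k) ≤ e²·a^{δv}, where a = e^{−1/(2e+1)}. -/
/-!
Take `k = ⌊(δv - 2e)/(2e + δ)⌋₊`. For `k ≥ 1` this choice gives `δ(v - k) ≥ 2e(k + 1)`, so the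
left-hand side is at most `(2/e)^k k! / (k + 1)^k ≤ e^{-k}`, using `2^k k! ≤ (k + 1)^k`
(the ratio `(k + 1)^k / (2^k k!)` is nondecreasing by Bernoulli's inequality). The choice also
gives `δv/(2e + 1) < k + 2`, hence `e^{-k} ≤ e^{2 - δv/(2e+1)} = e² a^{δv}`.
-/

open Real Nat

theorem two_pow_mul_factorial_le_succ_pow (n : ℕ) : 2 ^ n * n ! ≤ (n + 1) ^ n := by
  induction n with
  | zero => simp
  | succ n ih =>
    have bernoulli : (n + 1) ^ (n + 1) + (n + 1) * (n + 1) ^ n * 1 ≤ (n + 1 + 1) ^ (n + 1) :=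
      pow_add_mul_le_add_pow (by positivity) (by positivity) (n + 1)
    calc 2 ^ (n + 1) * (n + 1)! = 2 * (n + 1) * (2 ^ n * n !) := by
          rw [factorial_succ]; ring
      _ ≤ 2 * (n + 1) * (n + 1) ^ n := Nat.mul_le_mul_left _ ih
      _ ≤ (n + 1 + 1) ^ (n + 1) := by rw [pow_succ] at bernoulli; linarith

theorem four_pow_mul_factorial_div_le_exp_neg (k : ℕ) {w : ℝ}
    (hw : 2 * exp 1 * (k + 1) ≤ w) : 4 ^ k * k ! / w ^ k ≤ exp (-k) := by
  have hfact : (2 : ℝ) ^ k * k ! ≤ (k + 1) ^ k := by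
    exact_mod_cast two_pow_mul_factorial_le_succ_pow k
  calc 4 ^ k * k ! / w ^ k ≤ 4 ^ k * k ! / (2 * exp 1 * (k + 1)) ^ k := by gcongr
    _ = 2 ^ k * k ! / (k + 1) ^ k * (exp 1 ^ k)⁻¹ := by
        rw [mul_pow, mul_pow, show (4 : ℝ) ^ k = 2 ^ k * 2 ^ k by rw [← mul_pow]; norm_num]
        field_simp
    _ ≤ exp (-k) := by
        rw [← exp_nat_mul, mul_one, ← exp_neg]
        exact mul_le_of_le_one_left (by positivity) ((div_le_one (by positivity)).2 hfact)

section FloorChoice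

variable {c δ : ℝ}

theorem floor_sub_div_lt {v : ℕ} (hv : v ≠ 0) (hc : 0 < c) (hδ : 0 < δ) :
    ⌊(δ * v - c) / (c + δ)⌋₊ < v := by
  rw [Nat.floor_lt' hv, div_lt_iff₀ (by positivity)]
  nlinarith [(Nat.cast_pos.2 (Nat.pos_of_ne_zero hv) : (0 : ℝ) < v)]

theorem mul_succ_le_mul_sub_of_le_floor {v : ℝ} {k : ℕ} (hk : k ≠ 0) (hc : 0 ≤ c) (hδ : 0 < δ)
    (hkv : k ≤ ⌊(δ * v - c) / (c + δ)⌋₊) : c * (k + 1) ≤ δ * (v - k) := by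
  have hky := (Nat.le_floor_iff' hk).1 hkv
  rw [le_div_iff₀ (by positivity)] at hky
  linarith

theorem div_lt_floor_sub_div_add_two {s : ℝ} (hs : 0 ≤ s) (hc : 0 ≤ c) (hδ : 0 < δ)
    (hδ1 : δ ≤ 1) : s / (c + 1) < ⌊(s - c) / (c + δ)⌋₊ + 2 := by
  have hfloor := Nat.lt_floor_add_one ((s - c) / (c + δ))
  have hy : s / (c + 1) ≤ (s - c) / (c + δ) + 1 := by
    rw [div_add_one (by positivity : c + δ ≠ 0), div_le_div_iff₀ (by positivity) (by positivity)]
    nlinarith [mul_nonneg hs (sub_nonneg.2 hδ1)]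
  linarith

end FloorChoice

/-- For every positive integer `v` and `δ ∈ (0,1]`, there is a nonnegative integer `k < v`
with `4^k·k!/(δ^k(v-k)^k) ≤ e²·a^{δv}` where `a = e^{-1/(2e+1)}`. -/
theorem exists_k_bound (v : ℕ) (hv : 1 ≤ v) (δ : ℝ) (hδ : δ ∈ Set.Ioc (0 : ℝ) 1) :
    ∃ k : ℕ, k < v ∧
      (4 : ℝ) ^ k * (Nat.factorial k : ℝ) / (δ ^ k * ((v : ℝ) - (k : ℝ)) ^ k) ≤
        Real.exp 2 * Real.exp (-1 / (2 * Real.exp 1 + 1)) ^ (δ * (v : ℝ)) := by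
  obtain ⟨hδ0, hδ1⟩ := hδ
  have hc : 0 < 2 * exp 1 := by positivity
  set k := ⌊(δ * v - 2 * exp 1) / (2 * exp 1 + δ)⌋₊
  refine ⟨k, floor_sub_div_lt (by omega) hc hδ0, ?_⟩
  have hbound : (4 : ℝ) ^ k * k ! / (δ ^ k * (v - k) ^ k) ≤ exp (-k) := by
    rcases eq_or_ne k 0 with hk0 | hk0
    · simp [hk0]
    · rw [← mul_pow]
      exact four_pow_mul_factorial_div_le_exp_neg k
        (mul_succ_le_mul_sub_of_le_floor hk0 hc.le hδ0 le_rfl)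
  have hk2 : δ * v / (2 * exp 1 + 1) < k + 2 :=
    div_lt_floor_sub_div_add_two (by positivity) hc.le hδ0 hδ1
  refine hbound.trans ?_
  rw [← exp_mul, ← exp_add, exp_le_exp]
  have hexponent : -1 / (2 * exp 1 + 1) * (δ * v) = -(δ * v / (2 * exp 1 + 1)) := by ring
  linarith
end

section
/- Let C be a finite set (e.g. C = {0,1}ⁿ), let G : C → Sym(m,ℝ) be a map into symmetric m×m matrices all of whose eigenvalues lie in [-1,1], and let X = {x ∈ C : G(x) ⪰ 0} be nonempty with C \ X nonempty. Set λ = max_{x ∈ C\X} λ_min(G(x)), where λ_min denotes the smallest eigenvalue; then λ ∈ [-1, 0). Suppose h is a continuous function on [-1,1] with 0 < h(t) ≤ 1 on [0,1], h(t) > 0 on [-1,1], and h(t) ≥ -m/λ - 1/2 on [-1, λ]. Then X = {x ∈ C : Σ_{j=1}^m λⱼ(G(x))·h(λⱼ(G(x))) ≥ 0}. -/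
/-! On `X` every eigenvalue is nonnegative and `h > 0`, so every term of the sum is nonnegative.
Off `X`, the smallest eigenvalue `μ` satisfies `-1 ≤ μ ≤ λ < 0`, so `μ / λ ≥ 1` and
`μ h(μ) ≤ μ (-m/λ - 1/2) ≤ -m + 1/2`; each of the other `m - 1` terms `t h(t)` is at most `1`
(it is `≤ 0` for `t < 0` and `≤ t ≤ 1` for `t ≥ 0`), so the whole sum is at most `-1/2`. -/

open Finset

theorem sum_neg_of_le_one_of_le_half_sub_card {ι : Type*} [Fintype ι] {f : ι → ℝ}
    (hf : ∀ i, f i ≤ 1) {i₀ : ι} (hi₀ : f i₀ ≤ 1 / 2 - Fintype.card ι) : ∑ i, f i < 0 := by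
  have h : 1 - f i₀ ≤ ∑ i, (1 - f i) :=
    single_le_sum (fun i _ => sub_nonneg.2 (hf i)) (mem_univ i₀)
  rw [sum_sub_distrib, sum_const, card_univ, nsmul_one] at h
  linarith

theorem mul_le_one_of_mem_Icc_of_nonneg {t y : ℝ} (ht : t ∈ Set.Icc (-1) 1) (hy : 0 ≤ y)
    (hy₁ : 0 ≤ t → y ≤ 1) : t * y ≤ 1 := by
  rcases le_or_gt 0 t with h | h
  · exact mul_le_one₀ ht.2 hy (hy₁ h)
  · exact (mul_nonpos_of_nonpos_of_nonneg h.le hy).trans zero_le_one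

theorem mul_le_half_sub_of_div_sub_half_le {c lam μ y : ℝ} (hc : 0 ≤ c) (hlam : lam < 0)
    (hμ : μ ∈ Set.Icc (-1) lam) (hy : -c / lam - 1 / 2 ≤ y) : μ * y ≤ 1 / 2 - c := by
  have hratio : 1 ≤ μ / lam := (one_le_div_of_neg hlam).2 hμ.2
  calc μ * y ≤ μ * (-c / lam - 1 / 2) := mul_le_mul_of_nonpos_left hy (by linarith [hμ.2])
    _ = -c * (μ / lam) - μ / 2 := by field_simp
    _ ≤ 1 / 2 - c := by nlinarith [hμ.1]

namespace Matrix.IsHermitian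

open scoped ComplexOrder

variable {𝕜 n : Type*} [RCLike 𝕜] [Fintype n] [DecidableEq n] {A : Matrix n n 𝕜}

theorem exists_eigenvalues_neg_of_not_posSemidef (hA : A.IsHermitian) (h : ¬ A.PosSemidef) :
    ∃ i, hA.eigenvalues i < 0 := by
  simpa [hA.posSemidef_iff_eigenvalues_nonneg, Pi.le_def] using h

theorem exists_eigenvalues_eq_iInf_of_not_posSemidef (hA : A.IsHermitian)
    (h : ¬ A.PosSemidef) : ∃ i, hA.eigenvalues i = ⨅ j, hA.eigenvalues j := by
  obtain ⟨i, -⟩ := hA.exists_eigenvalues_neg_of_not_posSemidef h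
  have : Nonempty n := ⟨i⟩
  exact exists_eq_ciInf_of_finite

theorem iInf_eigenvalues_neg_of_not_posSemidef (hA : A.IsHermitian) (h : ¬ A.PosSemidef) :
    ⨅ j, hA.eigenvalues j < 0 := by
  obtain ⟨i, hi⟩ := hA.exists_eigenvalues_neg_of_not_posSemidef h
  exact (ciInf_le (Set.finite_range _).bddBelow i).trans_lt hi

end Matrix.IsHermitian

theorem simple_representation_discrete_general
    (C : Type*) [Fintype C] (m : ℕ)
    (G : C → Matrix (Fin m) (Fin m) ℝ) (hG : ∀ x, (G x).IsHermitian)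
    (heig : ∀ x j, (hG x).eigenvalues j ∈ Set.Icc (-1 : ℝ) 1)
    (lam : ℝ)
    (hlam_ub : ∀ x, ¬ (G x).PosSemidef → (⨅ j, (hG x).eigenvalues j) ≤ lam)
    (hlam_mem : ∃ x, ¬ (G x).PosSemidef ∧ (⨅ j, (hG x).eigenvalues j) = lam)
    (h : ℝ → ℝ)
    (h1 : ∀ t ∈ Set.Icc (0 : ℝ) 1, 0 < h t ∧ h t ≤ 1)
    (h2 : ∀ t ∈ Set.Icc (-1 : ℝ) 1, 0 < h t)
    (h3 : ∀ t ∈ Set.Icc (-1 : ℝ) lam, -(m : ℝ) / lam - 1 / 2 ≤ h t) :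
    lam ∈ Set.Ico (-1 : ℝ) 0 ∧
      {x : C | (G x).PosSemidef} =
        {x : C | 0 ≤ ∑ j, (hG x).eigenvalues j * h ((hG x).eigenvalues j)} := by
  obtain ⟨x₀, hx₀, rfl⟩ := hlam_mem
  have hlam_neg := (hG x₀).iInf_eigenvalues_neg_of_not_posSemidef hx₀
  obtain ⟨i₀, hi₀⟩ := (hG x₀).exists_eigenvalues_eq_iInf_of_not_posSemidef hx₀
  refine ⟨⟨hi₀ ▸ (heig x₀ i₀).1, hlam_neg⟩, Set.ext fun x => ⟨fun hx => ?_, fun hsum => ?_⟩⟩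
  · exact sum_nonneg fun j _ => mul_nonneg (hx.eigenvalues_nonneg j) (h2 _ (heig x j)).le
  · by_contra hx
    obtain ⟨j₀, hj₀⟩ := (hG x).exists_eigenvalues_eq_iInf_of_not_posSemidef hx
    have hμ : (hG x).eigenvalues j₀ ∈ Set.Icc (-1) (⨅ j, (hG x₀).eigenvalues j) :=
      ⟨(heig x j₀).1, hj₀ ▸ hlam_ub x hx⟩
    refine (sum_neg_of_le_one_of_le_half_sub_card (i₀ := j₀) (fun j => ?_) ?_).not_ge hsum
    · exact mul_le_one_of_mem_Icc_of_nonneg (heig x j) (h2 _ (heig x j)).le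
        fun hj => (h1 _ ⟨hj, (heig x j).2⟩).2
    · rw [Fintype.card_fin]
      exact mul_le_half_sub_of_div_sub_half_le m.cast_nonneg hlam_neg hμ (h3 _ hμ)

/-- Over a finite set `C`, with `G : C → Sym(m,ℝ)` having all eigenvalues in `[-1,1]`,
`X = {x ∈ C : G(x) ⪰ 0}` nonempty with nonempty complement, and
`λ = max_{x ∈ C\X} λ_min(G(x))`, one has `λ ∈ [-1,0)`; and for any continuous `h` on
`[-1,1]` with `0 < h ≤ 1` on `[0,1]`, `h > 0` on `[-1,1]`, `h ≥ -m/λ - 1/2` on `[-1,λ]`: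
`X = {x ∈ C : ∑ⱼ λⱼ(G(x))·h(λⱼ(G(x))) ≥ 0}`. -/
theorem simple_representation_discrete
    (C : Type*) [Fintype C] (m : ℕ) (hm : 0 < m)
    (G : C → Matrix (Fin m) (Fin m) ℝ) (hG : ∀ x, (G x).IsHermitian)
    (heig : ∀ x j, (hG x).eigenvalues j ∈ Set.Icc (-1 : ℝ) 1)
    (hXne : ∃ x, (G x).PosSemidef) (hXcne : ∃ x, ¬ (G x).PosSemidef)
    (lam : ℝ)
    (hlam_ub : ∀ x, ¬ (G x).PosSemidef → (⨅ j, (hG x).eigenvalues j) ≤ lam)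
    (hlam_mem : ∃ x, ¬ (G x).PosSemidef ∧ (⨅ j, (hG x).eigenvalues j) = lam)
    (h : ℝ → ℝ) (hcont : ContinuousOn h (Set.Icc (-1) 1))
    (h1 : ∀ t ∈ Set.Icc (0 : ℝ) 1, 0 < h t ∧ h t ≤ 1)
    (h2 : ∀ t ∈ Set.Icc (-1 : ℝ) 1, 0 < h t)
    (h3 : ∀ t ∈ Set.Icc (-1 : ℝ) lam, -(m : ℝ) / lam - 1 / 2 ≤ h t) :
    lam ∈ Set.Ico (-1 : ℝ) 0 ∧
      {x : C | (G x).PosSemidef} =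
        {x : C | 0 ≤ ∑ j, (hG x).eigenvalues j * h ((hG x).eigenvalues j)} :=
  simple_representation_discrete_general C m G hG heig lam hlam_ub hlam_mem h h1 h2 h3
end
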